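/- The second-neighbor Lennard-Jones chain energy density has a unique ground-state lattice constant: the function g(r) := φ(r) + φ(2r) attains a global minimum over (0,∞) at a unique point a₀, and this minimizer satisfies 0.99 < a₀ < 1. -/

import Mathlib

/-!
In the variable `u = r⁻⁶` the energy density `φ(r) + φ(2r) = (1 + 2⁻¹²) u² − 2 (1 + 2⁻⁶) u`
is a convex quadratic, whose unique minimum sits at `u = (1 + 2⁻⁶) / (1 + 2⁻¹²) = 4160 / 4097`.
Since `r ↦ r⁶` is injective on `(0, ∞)`, the ground state is `a₀ = (4097 / 4160)^(1/6)`, and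
`0.99⁶ < 4097 / 4160 < 1` locates it.
-/

/-- The Lennard-Jones potential `φ(r) = r⁻¹² − 2 r⁻⁶`. -/
noncomputable def LJ : ℝ → ℝ := fun r => r ^ (-12 : ℤ) - 2 * r ^ (-6 : ℤ)

lemma LJ_eq (r : ℝ) : LJ r = ((r ^ 6)⁻¹) ^ 2 - 2 * (r ^ 6)⁻¹ := by
  simp only [LJ, zpow_neg, ← pow_mul, inv_pow]
  norm_cast

lemma LJ_add_LJ_two_mul (r : ℝ) :
    LJ r + LJ (2 * r) = 4097 / 4096 * ((r ^ 6)⁻¹ - 4160 / 4097) ^ 2 - 4225 / 4097 := by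
  rw [LJ_eq, LJ_eq, mul_pow, mul_inv]
  ring

lemma LJ_add_LJ_two_mul_ge (r : ℝ) : -(4225 / 4097) ≤ LJ r + LJ (2 * r) := by
  rw [LJ_add_LJ_two_mul]
  nlinarith [sq_nonneg ((r ^ 6)⁻¹ - 4160 / 4097)]

lemma LJ_add_LJ_two_mul_eq_iff (r : ℝ) :
    LJ r + LJ (2 * r) = -(4225 / 4097) ↔ r ^ 6 = 4097 / 4160 := by
  have hu : r ^ 6 = 4097 / 4160 ↔ (r ^ 6)⁻¹ - 4160 / 4097 = 0 := by
    rw [sub_eq_zero, inv_eq_iff_eq_inv, inv_div]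
  rw [LJ_add_LJ_two_mul, hu, ← pow_eq_zero_iff two_ne_zero]
  constructor <;> intro h <;> linarith

/-- The second-neighbor Lennard-Jones energy density `g(r) = φ(r) + φ(2r)` attains a
global minimum over `(0,∞)` at a unique point `a₀`, and `0.99 < a₀ < 1`. -/
theorem stmt_9 :
    ∃ a₀ : ℝ, 0 < a₀ ∧
      (∀ r : ℝ, 0 < r → LJ a₀ + LJ (2 * a₀) ≤ LJ r + LJ (2 * r)) ∧
      (∀ b : ℝ, 0 < b → (∀ r : ℝ, 0 < r → LJ b + LJ (2 * b) ≤ LJ r + LJ (2 * r)) → b = a₀) ∧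
      0.99 < a₀ ∧ a₀ < 1 := by
  set a₀ : ℝ := (4097 / 4160) ^ ((6 : ℕ) : ℝ)⁻¹
  have ha₀_pos : 0 < a₀ := by positivity
  have ha₀_pow : a₀ ^ 6 = 4097 / 4160 := Real.rpow_inv_natCast_pow (by norm_num) (by norm_num)
  have hmin : LJ a₀ + LJ (2 * a₀) = -(4225 / 4097) := (LJ_add_LJ_two_mul_eq_iff a₀).mpr ha₀_pow
  refine ⟨a₀, ha₀_pos, fun r _ => hmin ▸ LJ_add_LJ_two_mul_ge r, fun b hb hb_min => ?_, ?_, ?_⟩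
  · have hb_eq : LJ b + LJ (2 * b) = -(4225 / 4097) :=
      le_antisymm (hmin ▸ hb_min a₀ ha₀_pos) (LJ_add_LJ_two_mul_ge b)
    rw [← pow_left_inj₀ hb.le ha₀_pos.le (n := 6) (by norm_num), ha₀_pow]
    exact (LJ_add_LJ_two_mul_eq_iff b).mp hb_eq
  · rw [← pow_lt_pow_iff_left₀ (by norm_num) ha₀_pos.le (n := 6) (by norm_num), ha₀_pow]
    norm_num
  · rw [← pow_lt_pow_iff_left₀ ha₀_pos.le zero_le_one (n := 6) (by norm_num), ha₀_pow]
    norm_num
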